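/- Let φ₀, φ₁ be real numbers with −π ≤ −φ₁ < φ₀ < 0. If p(0) < 0, then q(θ) ≠ 0 for every θ in the interval [0, π/2 + φ₀]. -/
import Mathlib


open Real

/-- `p φ₀ δ θ = ∫_θ^{θ+δ} sin(u + φ₀ - θ)/√u du` -/
noncomputable def p (φ₀ δ θ : ℝ) : ℝ := ∫ u in θ..(θ + δ), Real.sin (u + φ₀ - θ) / Real.sqrt u

/-- `q φ₀ δ θ = p φ₀ δ θ + 2 ∫₀^θ sin(u + φ₀ - θ)/√u du` -/
noncomputable def q (φ₀ δ θ : ℝ) : ℝ :=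
  p φ₀ δ θ + 2 * ∫ u in (0:ℝ)..θ, Real.sin (u + φ₀ - θ) / Real.sqrt u

open MeasureTheory intervalIntegral in
lemma sinDivSqrt_intInt (c : ℝ) {a b : ℝ} (ha : 0 ≤ a) (hb : 0 ≤ b) :
    IntervalIntegrable (fun u => Real.sin (u + c) / Real.sqrt u) volume a b := by
  have h1 : IntervalIntegrable (fun u : ℝ => u ^ (-(1:ℝ)/2)) volume a b :=
    intervalIntegrable_rpow' (by norm_num)
  refine h1.mono_fun ?_ ?_
  · exact ((Real.measurable_sin.comp (measurable_id.add_const c)).div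
      Real.continuous_sqrt.measurable).aestronglyMeasurable
  · filter_upwards [ae_restrict_mem measurableSet_uIoc] with u hu
    have hu0 : 0 < u := lt_of_le_of_lt (le_min ha hb) hu.1
    have hsq : 0 < Real.sqrt u := Real.sqrt_pos.2 hu0
    have hr : u ^ (-(1:ℝ)/2) = 1 / Real.sqrt u := by
      rw [Real.sqrt_eq_rpow, neg_div, Real.rpow_neg hu0.le]
      exact (one_div _).symm
    simp only [Real.norm_eq_abs, hr, abs_div, abs_of_pos hsq,
      abs_of_pos (by positivity : (0:ℝ) < 1 / Real.sqrt u)]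
    gcongr
    exact abs_le.2 ⟨Real.neg_one_le_sin _, Real.sin_le_one _⟩

open MeasureTheory intervalIntegral in
theorem stmt8 (φ₀ φ₁ : ℝ) (h0 : -π ≤ -φ₁) (h1 : -φ₁ < φ₀) (h2 : φ₀ < 0)
    (hp0 : p φ₀ (φ₁ - φ₀) 0 < 0) :
    ∀ θ ∈ Set.Icc (0:ℝ) (π / 2 + φ₀), q φ₀ (φ₁ - φ₀) θ ≠ 0 := by
  rintro θ ⟨hθ0, hθ1⟩
  have hπ := Real.pi_pos
  have hφ₁ : 0 < φ₁ := by linarith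
  have hφ₁π : φ₁ ≤ π := by linarith
  set g : ℝ → ℝ := fun u => Real.sin (u + (φ₀ - θ)) / Real.sqrt u with hg
  set g0 : ℝ → ℝ := fun u => Real.sin (u + φ₀) / Real.sqrt u with hg0
  have hfun : (fun u => Real.sin (u + φ₀ - θ) / Real.sqrt u) = g := by
    funext u; rw [hg]; ring_nf
  -- integrability
  have II : ∀ {x y : ℝ}, 0 ≤ x → 0 ≤ y → IntervalIntegrable g volume x y :=
    fun hx hy => sinDivSqrt_intInt (φ₀ - θ) hx hy
  have II0 : ∀ {x y : ℝ}, 0 ≤ x → 0 ≤ y → IntervalIntegrable g0 volume x y :=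
    fun hx hy => sinDivSqrt_intInt φ₀ hx hy
  have h0φ : (0:ℝ) ≤ -φ₀ := by linarith
  have h0θφ : (0:ℝ) ≤ θ - φ₀ := by linarith
  have h0θδ : (0:ℝ) ≤ θ + (φ₁ - φ₀) := by linarith
  have h0δ : (0:ℝ) ≤ φ₁ - φ₀ := by linarith
  -- decomposition of q
  have s1 : (∫ u in θ..(θ - φ₀), g u) + ∫ u in (θ - φ₀)..(θ + (φ₁ - φ₀)), g u
      = ∫ u in θ..(θ + (φ₁ - φ₀)), g u :=
    integral_add_adjacent_intervals (II hθ0 h0θφ) (II h0θφ h0θδ)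
  have s2 : (∫ u in (0:ℝ)..θ, g u) + ∫ u in θ..(θ - φ₀), g u
      = ∫ u in (0:ℝ)..(θ - φ₀), g u :=
    integral_add_adjacent_intervals (II le_rfl hθ0) (II hθ0 h0θφ)
  have hq : q φ₀ (φ₁ - φ₀) θ = (∫ u in (0:ℝ)..(θ - φ₀), g u) + (∫ u in (0:ℝ)..θ, g u)
      + ∫ u in (θ - φ₀)..(θ + (φ₁ - φ₀)), g u := by
    unfold q p
    rw [hfun]
    linarith
  -- decomposition of p at 0
  have hp : p φ₀ (φ₁ - φ₀) 0 = (∫ u in (0:ℝ)..(-φ₀), g0 u)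
      + ∫ u in (-φ₀)..(φ₁ - φ₀), g0 u := by
    unfold p
    simp only [zero_add, sub_zero]
    exact (integral_add_adjacent_intervals (II0 le_rfl h0φ) (II0 h0φ h0δ)).symm
  -- substitution for the positive parts
  have hsub1 : (∫ u in (θ - φ₀)..(θ + (φ₁ - φ₀)), g u)
      = ∫ v in (0:ℝ)..φ₁, Real.sin v / Real.sqrt (v + (θ - φ₀)) := by
    have h := intervalIntegral.integral_comp_add_right (a := 0) (b := φ₁) g (θ - φ₀)
    rw [show (0:ℝ) + (θ - φ₀) = θ - φ₀ by ring,
      show φ₁ + (θ - φ₀) = θ + (φ₁ - φ₀) by ring] at h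
    rw [← h, hg]
    simp only [show ∀ v : ℝ, v + (θ - φ₀) + (φ₀ - θ) = v from fun v => by ring]
  have hsub0 : (∫ u in (-φ₀)..(φ₁ - φ₀), g0 u)
      = ∫ v in (0:ℝ)..φ₁, Real.sin v / Real.sqrt (v + -φ₀) := by
    have h := intervalIntegral.integral_comp_add_right (a := 0) (b := φ₁) g0 (-φ₀)
    rw [show (0:ℝ) + -φ₀ = -φ₀ by ring, show φ₁ + -φ₀ = φ₁ - φ₀ by ring] at h
    rw [← h, hg0]
    simp only [show ∀ v : ℝ, v + -φ₀ + φ₀ = v from fun v => by ring]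
  -- continuity-integrability of shifted positive integrand
  have cont : ∀ s : ℝ, 0 < s →
      IntervalIntegrable (fun v => Real.sin v / Real.sqrt (v + s)) volume 0 φ₁ := by
    intro s hs
    apply ContinuousOn.intervalIntegrable
    apply Real.continuous_sin.continuousOn.div
      ((Real.continuous_sqrt.comp (continuous_id.add continuous_const)).continuousOn)
    intro v hv
    rw [Set.uIcc_of_le hφ₁.le] at hv
    have hvs : (0:ℝ) < v + s := by linarith [hv.1]
    show Real.sqrt (v + s) ≠ 0
    exact (Real.sqrt_pos.2 hvs).ne'
  -- inequality 1 : ∫_0^θ g ≤ 0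
  have I1 : (∫ u in (0:ℝ)..θ, g u) ≤ 0 := by
    have := integral_mono_on (μ := volume) hθ0 (II le_rfl hθ0)
      (_root_.intervalIntegrable_const (c := (0:ℝ))) (g := fun _ => (0:ℝ)) ?_
    · simpa using this
    · intro u hu
      exact div_nonpos_of_nonpos_of_nonneg
        (Real.sin_nonpos_of_nonpos_of_neg_pi_le (by linarith [hu.2]) (by linarith [hu.1]))
        (Real.sqrt_nonneg u)
  -- inequality 2 : ∫_{-φ₀}^{θ-φ₀} g ≤ 0
  have I2 : (∫ u in (-φ₀)..(θ - φ₀), g u) ≤ 0 := by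
    have := integral_mono_on (μ := volume) (by linarith : -φ₀ ≤ θ - φ₀) (II h0φ h0θφ)
      (_root_.intervalIntegrable_const (c := (0:ℝ))) (g := fun _ => (0:ℝ)) ?_
    · simpa using this
    · intro u hu
      exact div_nonpos_of_nonpos_of_nonneg
        (Real.sin_nonpos_of_nonpos_of_neg_pi_le (by linarith [hu.2]) (by linarith [hu.1]))
        (Real.sqrt_nonneg u)
  have s3 : (∫ u in (0:ℝ)..(-φ₀), g u) + ∫ u in (-φ₀)..(θ - φ₀), g u
      = ∫ u in (0:ℝ)..(θ - φ₀), g u :=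
    integral_add_adjacent_intervals (II le_rfl h0φ) (II h0φ h0θφ)
  -- inequality 3 : ∫_0^{-φ₀} g ≤ ∫_0^{-φ₀} g0
  have I3 : (∫ u in (0:ℝ)..(-φ₀), g u) ≤ ∫ u in (0:ℝ)..(-φ₀), g0 u := by
    apply integral_mono_on h0φ (II le_rfl h0φ) (II0 le_rfl h0φ)
    intro u hu
    have hsin : Real.sin (u + (φ₀ - θ)) ≤ Real.sin (u + φ₀) := by
      apply Real.sin_le_sin_of_le_of_le_pi_div_two (by linarith [hu.1]) (by linarith [hu.2])
      linarith
    rcases (Real.sqrt_nonneg u).eq_or_lt with h | h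
    · simp only [hg, hg0, ← h, div_zero]
      exact le_rfl
    · exact (div_le_div_iff_of_pos_right h).2 hsin
  -- inequality 4 : positive part decreases
  have I4 : (∫ v in (0:ℝ)..φ₁, Real.sin v / Real.sqrt (v + (θ - φ₀)))
      ≤ ∫ v in (0:ℝ)..φ₁, Real.sin v / Real.sqrt (v + -φ₀) := by
    apply integral_mono_on hφ₁.le (cont _ (by linarith)) (cont _ (by linarith))
    intro v hv
    have h1' : (0:ℝ) < Real.sqrt (v + -φ₀) := Real.sqrt_pos.2 (by linarith [hv.1])
    have h2' : Real.sqrt (v + -φ₀) ≤ Real.sqrt (v + (θ - φ₀)) :=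
      Real.sqrt_le_sqrt (by linarith)
    have h3' : 0 ≤ Real.sin v := Real.sin_nonneg_of_nonneg_of_le_pi hv.1 (hv.2.trans hφ₁π)
    exact div_le_div_of_nonneg_left h3' h1' h2' |>.trans_eq rfl
  have hfinal : q φ₀ (φ₁ - φ₀) θ ≤ p φ₀ (φ₁ - φ₀) 0 := by
    rw [hq, hp, hsub1, hsub0]
    linarith
  exact (lt_of_le_of_lt hfinal hp0).ne
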